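/- arXiv:2409.04026 — 2 statements merged into one kernel-verified Lean document; each statement's English description precedes it below -/
import Mathlib

section
/- Let d ≥ 2, n ≥ 1, ω = e^{2πi/d}. Applying H^{⊗n} to the phased GHZ state |ψ_m⟩ = (1/√d) ∑_{j=0}^{d-1} ω^{jm} |j⟩^{⊗n} yields the state (1/√{d^{n-1}}) ∑_{k ∈ (ℤ_d)^n, m + ‖k‖ ≡ 0 (mod d)} |k⟩, where ‖k‖ = ∑_i k_i. -/
/-!
`H^{⊗n}` sends `|j⟩^{⊗n}` to `d^{-n/2} ∑_k ω^{j‖k‖} |k⟩`, so the amplitude of `|k⟩` in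
`H^{⊗n} |ψ_m⟩` is `d^{-(n+1)/2} ∑_j (ω^{m + ‖k‖})^j`. Since `ω` is a primitive `d`-th root of
unity, this geometric sum is `d` when `d ∣ m + ‖k‖` and `0` otherwise.
-/

open Finset

noncomputable def Hmat (d : ℕ) : Matrix (Fin d) (Fin d) ℂ :=
  fun j s => (Complex.exp (2 * Real.pi * Complex.I / d)) ^ ((j : ℕ) * (s : ℕ)) / Real.sqrt d

/-- Action of `H^{⊗n}` on a state of `n` qudits. -/
noncomputable def Hn (d n : ℕ) (ψ : (Fin n → Fin d) → ℂ) : (Fin n → Fin d) → ℂ :=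
  fun k => ∑ j : Fin n → Fin d, (∏ i, Hmat d (k i) (j i)) * ψ j

/-- The phased GHZ state `|ψ_m⟩ = (1/√d) ∑_j ω^{jm} |j⟩^{⊗n}`. -/
noncomputable def psiGHZ (d n m : ℕ) : (Fin n → Fin d) → ℂ :=
  fun v => (1 / Real.sqrt d) *
    ∑ j : Fin d, (if v = fun _ => j then
      (Complex.exp (2 * Real.pi * Complex.I / d)) ^ ((j : ℕ) * m) else 0)

theorem IsPrimitiveRoot.geom_sum_pow_eq_ite {R : Type*} [CommRing R] [IsDomain R] {ζ : R}
    {d : ℕ} (hζ : IsPrimitiveRoot ζ d) (a : ℕ) :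
    ∑ j ∈ range d, (ζ ^ a) ^ j = if d ∣ a then (d : R) else 0 := by
  split_ifs with h
  · simp [(hζ.pow_eq_one_iff_dvd a).mpr h]
  · have hne : ζ ^ a - 1 ≠ 0 := sub_ne_zero.mpr (mt (hζ.pow_eq_one_iff_dvd a).mp h)
    have hpow : (ζ ^ a) ^ d = 1 := by rw [← pow_mul, mul_comm, pow_mul, hζ.pow_eq_one, one_pow]
    simpa [hpow, hne] using geom_sum_mul (ζ ^ a) d

theorem Real.sqrt_pow {x : ℝ} (hx : 0 ≤ x) (n : ℕ) : √(x ^ n) = √x ^ n := by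
  rw [Real.sqrt_eq_iff_mul_self_eq (pow_nonneg hx n) (by positivity), ← mul_pow,
    Real.mul_self_sqrt hx]

theorem Real.div_sqrt_pow_succ {x : ℝ} (hx : 0 < x) {n : ℕ} (hn : 1 ≤ n) :
    x / √x ^ (n + 1) = 1 / √(x ^ (n - 1)) := by
  obtain ⟨n, rfl⟩ := Nat.exists_eq_add_of_le' hn
  have hsq : √x ^ 2 = x := Real.sq_sqrt hx.le
  rw [Nat.add_sub_cancel, Real.sqrt_pow hx.le, show n + 1 + 1 = n + 2 by rfl, pow_add, hsq]
  field_simp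

theorem Hn_const_mul (d n : ℕ) (c : ℂ) (ψ : (Fin n → Fin d) → ℂ) (k : Fin n → Fin d) :
    Hn d n (fun v => c * ψ v) k = c * Hn d n ψ k := by
  simp only [Hn, mul_sum, mul_left_comm]

theorem Hn_sum_ite_const (d n : ℕ) (f : Fin d → ℂ) (k : Fin n → Fin d) :
    Hn d n (fun v => ∑ j : Fin d, if v = (fun _ => j) then f j else 0) k =
      ∑ j, (∏ i, Hmat d (k i) j) * f j := by
  simp only [Hn, mul_sum, mul_ite, mul_zero]
  rw [sum_comm]
  simp

theorem prod_Hmat_apply {ι : Type*} [Fintype ι] (d : ℕ) (k : ι → Fin d) (j : Fin d) :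
    ∏ i, Hmat d (k i) j =
      Complex.exp (2 * Real.pi * Complex.I / d) ^ ((∑ i, (k i : ℕ)) * j) /
        (√d : ℂ) ^ Fintype.card ι := by
  simp only [Hmat, prod_div_distrib, prod_const, card_univ, prod_pow_eq_pow_sum, sum_mul]

theorem Hn_psiGHZ_apply (d n m : ℕ) (k : Fin n → Fin d) :
    Hn d n (psiGHZ d n m) k =
      (∑ j ∈ range d, (Complex.exp (2 * Real.pi * Complex.I / d) ^ (m + ∑ i, (k i : ℕ))) ^ j) /
        (√d : ℂ) ^ (n + 1) := by
  unfold psiGHZ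
  rw [Hn_const_mul, Hn_sum_ite_const, ← Fin.sum_univ_eq_sum_range, mul_sum, sum_div]
  refine sum_congr rfl fun j _ => ?_
  rw [prod_Hmat_apply, Fintype.card_fin, ← pow_mul, add_mul, pow_add]
  ring

theorem hadamard_on_phased_ghz (d n m : ℕ) (hd : 2 ≤ d) (hn : 1 ≤ n) :
    Hn d n (psiGHZ d n m) = fun (k : Fin n → Fin d) =>
      if (m + ∑ i, (k i : ℕ)) % d = 0 then ((1 / Real.sqrt ((d : ℝ) ^ (n - 1)) : ℝ) : ℂ)
      else 0 := by
  funext k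
  have hζ := Complex.isPrimitiveRoot_exp d (by omega)
  rw [Hn_psiGHZ_apply, hζ.geom_sum_pow_eq_ite]
  simp only [Nat.dvd_iff_mod_eq_zero]
  split_ifs
  · exact_mod_cast Real.div_sqrt_pow_succ (Nat.cast_pos.mpr (by omega)) hn
  · exact zero_div _
end

section
/- Let ρ'_m be as above (uniform superposition density matrix over basis vectors with coordinate sum ≡ -m mod d). The reduced density matrix of the first qudit, obtained by tracing out the other n−1 qudits, equals (1/d) I, independent of m. -/
lemma sol_unique (d : ℕ) (c : ℕ) (x y : Fin d)
    (hx : (c + (x : ℕ)) % d = 0) (hy : (c + (y : ℕ)) % d = 0) : x = y := by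
  have h1 : d ∣ c + (x : ℕ) := Nat.dvd_of_mod_eq_zero hx
  have h2 : d ∣ c + (y : ℕ) := Nat.dvd_of_mod_eq_zero hy
  apply Fin.ext
  rcases le_total (x : ℕ) (y : ℕ) with h | h
  · have hd : d ∣ (c + (y : ℕ)) - (c + (x : ℕ)) := Nat.dvd_sub h2 h1
    have hlt : (c + (y : ℕ)) - (c + (x : ℕ)) < d := by
      have := y.isLt; omega
    have := Nat.eq_zero_of_dvd_of_lt hd hlt
    omega
  · have hd : d ∣ (c + (x : ℕ)) - (c + (y : ℕ)) := Nat.dvd_sub h1 h2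
    have hlt : (c + (x : ℕ)) - (c + (y : ℕ)) < d := by
      have := x.isLt; omega
    have := Nat.eq_zero_of_dvd_of_lt hd hlt
    omega

lemma sol_exists (d : ℕ) (hd : 0 < d) (c : ℕ) : ∃ x : Fin d, (c + (x : ℕ)) % d = 0 := by
  refine ⟨⟨(d - c % d) % d, Nat.mod_lt _ hd⟩, ?_⟩
  show (c + (d - c % d) % d) % d = 0
  have hmod := Nat.div_add_mod c d
  have hlt := Nat.mod_lt c hd
  rcases Nat.eq_zero_or_pos (c % d) with h | h
  · have : (d - c % d) % d = 0 := by rw [h]; simp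
    rw [this]
    simpa using h
  · have h1 : (d - c % d) % d = d - c % d := Nat.mod_eq_of_lt (by omega)
    rw [h1]
    have : c + (d - c % d) = d * (c / d + 1) := by
      rw [Nat.mul_add, Nat.mul_one]; omega
    rw [this, Nat.mul_mod_right]

lemma sum_ite_one (d : ℕ) (hd : 0 < d) (c : ℕ) :
    (∑ x : Fin d, if (c + (x : ℕ)) % d = 0 then (1 : ℕ) else 0) = 1 := by
  obtain ⟨x0, hx0⟩ := sol_exists d hd c
  have hiff : ∀ x : Fin d, ((c + (x : ℕ)) % d = 0) ↔ x = x0 :=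
    fun x => ⟨fun h => sol_unique d c x x0 h hx0, fun h => h ▸ hx0⟩
  simp only [hiff]
  simp

lemma card_sol (d : ℕ) (hd : 0 < d) (k' c : ℕ) :
    (Finset.univ.filter (fun t : Fin (k' + 1) → Fin d =>
      (c + ∑ i, (t i : ℕ)) % d = 0)).card = d ^ k' := by
  rw [Finset.card_filter]
  have key := Fintype.sum_equiv (Fin.consEquiv (fun _ : Fin (k'+1) => Fin d))
      (fun p : Fin d × (Fin k' → Fin d) =>
        if (c + ((p.1 : ℕ) + ∑ i, (p.2 i : ℕ))) % d = 0 then (1:ℕ) else 0)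
      (fun t : Fin (k'+1) → Fin d => if (c + ∑ i, (t i : ℕ)) % d = 0 then 1 else 0)
      (by intro p; simp [Fin.consEquiv, Fin.sum_univ_succ, Fin.cons_zero, Fin.cons_succ])
  rw [← key, Fintype.sum_prod_type_right]
  have inner : ∀ s : Fin k' → Fin d,
      (∑ x : Fin d, if (c + ((x : ℕ) + ∑ i, (s i : ℕ))) % d = 0 then (1:ℕ) else 0) = 1 := by
    intro s
    have := sum_ite_one d hd (c + ∑ i, (s i : ℕ))
    simpa [Nat.add_assoc, Nat.add_comm, Nat.add_left_comm] using this
  simp [inner, Finset.card_univ]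

/-- Sum-condition: the total coordinate sum plus `m` is `0` mod `d`. -/
def sumCond (d k m : ℕ) (v : Fin d × (Fin k → Fin d)) : Prop :=
  (m + ((v.1 : ℕ) + ∑ i, (v.2 i : ℕ))) % d = 0

instance (d k m : ℕ) (v : Fin d × (Fin k → Fin d)) : Decidable (sumCond d k m v) := by
  unfold sumCond; infer_instance

/-- `ρ'_m`, the uniform-superposition density matrix over basis vectors with
coordinate sum `≡ -m (mod d)`, on `1 + k` qudits. -/
noncomputable def rho' (d k m : ℕ) :
    Matrix (Fin d × (Fin k → Fin d)) (Fin d × (Fin k → Fin d)) ℂ :=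
  fun v w => if sumCond d k m v ∧ sumCond d k m w then (1 / (d : ℂ) ^ k) else 0

theorem reduced_rho'_maximally_mixed (d k m : ℕ) (hd : 2 ≤ d) (hk : 1 ≤ k) :
    (fun a b => ∑ t : Fin k → Fin d, rho' d k m (a, t) (b, t)) =
      ((1 / d : ℂ) • (1 : Matrix (Fin d) (Fin d) ℂ)) := by
  have hd0 : 0 < d := by omega
  have hdC : (d : ℂ) ≠ 0 := Nat.cast_ne_zero.mpr (by omega)
  obtain ⟨k', rfl⟩ : ∃ k', k = k' + 1 := ⟨k - 1, by omega⟩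
  funext a b
  simp only [Matrix.smul_apply, Matrix.one_apply, smul_eq_mul]
  by_cases hab : a = b
  · subst hab
    simp only [if_pos rfl, mul_one]
    have hP : ∀ t : Fin (k' + 1) → Fin d,
        rho' d (k' + 1) m (a, t) (a, t)
          = if ((m + (a : ℕ)) + ∑ i, (t i : ℕ)) % d = 0 then (1 / (d : ℂ) ^ (k' + 1)) else 0 := by
      intro t
      unfold rho' sumCond
      simp only [and_self]
      congr 1
      simp only [eq_iff_iff]
      constructor <;> intro h <;> [skip; skip] <;>
        · convert h using 2; omega
    rw [Finset.sum_congr rfl (fun t _ => hP t), ← Finset.sum_filter, Finset.sum_const,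
      card_sol d hd0 k' (m + (a : ℕ)), nsmul_eq_mul]
    push_cast
    rw [pow_succ]
    field_simp
  · rw [if_neg hab, mul_zero]
    apply Finset.sum_eq_zero
    intro t _
    unfold rho' sumCond
    rw [if_neg]
    rintro ⟨h1, h2⟩
    dsimp only at h1 h2
    apply hab
    refine sol_unique d (m + ∑ i, (t i : ℕ)) a b ?_ ?_
    · convert h1 using 2; omega
    · convert h2 using 2; omega
end
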